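/- arXiv:1205.1106 — 2 statements merged into one kernel-verified Lean document; each statement's English description precedes it below -/
import Mathlib

section
/- For every α ∈ Con 𝐀 and every β ∈ Con 𝐁, one has β = α|_B if and only if β* ≤ α ≤ β̂. In particular, β*|_B = β = β̂|_B, so the |_B-inverse image of β is exactly the interval [β*, β̂] in Con 𝐀. -/
namespace Overalg

variable {A : Type*}

/-- `θ` is an equivalence relation on the whole type `A`, viewed as a set of pairs. -/
def IsEquivRel (θ : Set (A × A)) : Prop :=
  (∀ x : A, (x, x) ∈ θ) ∧ (∀ x y : A, (x, y) ∈ θ → (y, x) ∈ θ) ∧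
    (∀ x y z : A, (x, y) ∈ θ → (y, z) ∈ θ → (x, z) ∈ θ)

/-- `θ` is an equivalence relation on the subset `B` of `A`, viewed as a set of pairs. -/
def IsEquivOn (B : Set A) (θ : Set (A × A)) : Prop :=
  θ ⊆ B ×ˢ B ∧ (∀ x ∈ B, (x, x) ∈ θ) ∧ (∀ x y : A, (x, y) ∈ θ → (y, x) ∈ θ) ∧
    (∀ x y z : A, (x, y) ∈ θ → (y, z) ∈ θ → (x, z) ∈ θ)

/-- The clone of unary polynomials of the unary algebra `⟨A, F⟩`: the smallest set of
maps `A → A` containing `F`, the identity and all constants, closed under composition. -/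
inductive Pol1 (F : Set (A → A)) : (A → A) → Prop
  | base : ∀ f ∈ F, Pol1 F f
  | id : Pol1 F _root_.id
  | const : ∀ a : A, Pol1 F (fun _ => a)
  | comp : ∀ f g : A → A, Pol1 F f → Pol1 F g → Pol1 F (f ∘ g)

/-- A congruence of the unary algebra `⟨A, F⟩`. -/
def IsCon (F : Set (A → A)) (θ : Set (A × A)) : Prop :=
  IsEquivRel θ ∧ ∀ f ∈ F, ∀ p ∈ θ, (f p.1, f p.2) ∈ θ

end Overalg

namespace Overalg

variable {A : Type*}

/-- The congruence of `⟨A, F⟩` generated by a set of pairs. -/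
def cgA (F : Set (A → A)) (s : Set (A × A)) : Set (A × A) :=
  ⋂₀ {θ | IsCon F θ ∧ s ⊆ θ}

/-- A congruence of the algebra `𝐁 = ⟨B, F_B⟩`, where `B = e(A)` and
`F_B = {(e ∘ f)|_B : f ∈ Pol₁(𝐀)}`. -/
def IsConB (F : Set (A → A)) (e : A → A) (β : Set (A × A)) : Prop :=
  IsEquivOn (Set.range e) β ∧
    ∀ f : A → A, Pol1 F f → ∀ p ∈ β, (e (f p.1), e (f p.2)) ∈ β

/-- The congruence of `𝐁` generated by a set of pairs. -/
def cgB (F : Set (A → A)) (e : A → A) (s : Set (A × A)) : Set (A × A) :=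
  ⋂₀ {β | IsConB F e β ∧ s ⊆ β}

/-- McKenzie's hat operator: `β̂ = {(x,y) : ∀ f ∈ Pol₁(𝐀), (e(f x), e(f y)) ∈ β}`. -/
def hatRel (F : Set (A → A)) (e : A → A) (β : Set (A × A)) : Set (A × A) :=
  {p : A × A | ∀ f : A → A, Pol1 F f → (e (f p.1), e (f p.2)) ∈ β}

end Overalg

namespace Overalg

lemma isCon_pol1 {A : Type*} {F : Set (A → A)} {α : Set (A × A)} (hα : IsCon F α)
    {f : A → A} (hf : Pol1 F f) : ∀ p ∈ α, (f p.1, f p.2) ∈ α := by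
  induction hf with
  | base f hf => exact fun p hp => hα.2 f hf p hp
  | id => exact fun p hp => hp
  | const a => exact fun p _ => hα.1.1 a
  | comp f g hf hg ihf ihg => exact fun p hp => ihf (g p.1, g p.2) (ihg p hp)

end Overalg

open Overalg in
/-- For all `α ∈ Con 𝐀` and `β ∈ Con 𝐁`: `β = α|_B ↔ β* ≤ α ≤ β̂`.
In particular `β*|_B = β = β̂|_B`, so the `|_B`-inverse image of `β` is exactly the
interval `[β*, β̂]` in `Con 𝐀`. -/
theorem restriction_fiber_eq_interval {A : Type*} (F : Set (A → A)) (e : A → A)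
    (heP : Pol1 F e) (hee : e ∘ e = e)
    (α β : Set (A × A)) (hα : IsCon F α) (hβ : IsConB F e β) :
    (β = α ∩ (Set.range e ×ˢ Set.range e) ↔ (cgA F β ⊆ α ∧ α ⊆ hatRel F e β)) ∧
    cgA F β ∩ (Set.range e ×ˢ Set.range e) = β ∧
    hatRel F e β ∩ (Set.range e ×ˢ Set.range e) = β := by
  set B := Set.range e with hB
  have hβB : β ⊆ B ×ˢ B := hβ.1.1
  have hsub_hat : β ⊆ hatRel F e β := fun p hp f hf => hβ.2 f hf p hp
  have hhat_restr : hatRel F e β ∩ (B ×ˢ B) ⊆ β := by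
    rintro ⟨x, y⟩ ⟨hhat, ⟨a, ha⟩, ⟨b, hb⟩⟩
    have h := hhat _root_.id Pol1.id
    simp only [id] at h
    simp only at ha hb
    have hex : e x = x := ha ▸ congrFun hee a
    have hey : e y = y := hb ▸ congrFun hee b
    rwa [hex, hey] at h
  have hhat_con : IsCon F (hatRel F e β) := by
    refine ⟨⟨fun x f hf => hβ.1.2.1 _ ⟨f x, rfl⟩,
      fun x y hxy f hf => hβ.1.2.2.1 _ _ (hxy f hf),
      fun x y z hxy hyz f hf => hβ.1.2.2.2 _ _ _ (hxy f hf) (hyz f hf)⟩, ?_⟩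
    intro f hf p hp g hg
    exact hp (g ∘ f) (Pol1.comp g f hg (Pol1.base f hf))
  have hβcg : β ⊆ cgA F β := fun p hp => Set.mem_sInter.mpr (fun θ hθ => hθ.2 hp)
  have hcg_hat : cgA F β ⊆ hatRel F e β :=
    Set.sInter_subset_of_mem ⟨hhat_con, hsub_hat⟩
  refine ⟨⟨?_, ?_⟩, ?_, ?_⟩
  · rintro rfl
    refine ⟨Set.sInter_subset_of_mem ⟨hα, Set.inter_subset_left⟩, ?_⟩
    intro p hp f hf
    refine ⟨isCon_pol1 hα (Pol1.comp e f heP hf) p hp, ⟨f p.1, rfl⟩, ⟨f p.2, rfl⟩⟩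
  · rintro ⟨h1, h2⟩
    refine Set.Subset.antisymm (fun p hp => ⟨h1 (hβcg hp), hβB hp⟩) ?_
    rintro p ⟨hpα, hpB⟩
    exact hhat_restr ⟨h2 hpα, hpB⟩
  · exact Set.Subset.antisymm
      (fun p hp => hhat_restr ⟨hcg_hat hp.1, hp.2⟩)
      (fun p hp => ⟨hβcg hp, hβB hp⟩)
  · exact Set.Subset.antisymm hhat_restr (fun p hp => ⟨hsub_hat hp, hβB hp⟩)
end

section
/- In the overalgebra 𝐀 of the first type, for every β ∈ Con 𝐁 the relation β̃ = β⋆ ∪ ⋃_{n=1}^{N} ⋃_{r=1}^{m} ⋃_{ℓ≠r} (⋃_{i∈𝒯_n∩ℐ_r} C_ℓ^i)² is a congruence of 𝐀, and it is the largest congruence θ of 𝐀 satisfying θ∩(B×B) = β (that is, β̃ = β̂). -/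
namespace Overalg

/-- The data of an *overalgebra of the first type* built over a finite base algebra
`𝐁 = ⟨B 0, F⟩` from a tie-point sequence `t 1, …, t K` and a partition
`T 1 | ⋯ | T N` of the index set `{1, …, K}`.  The universe is `A = B 0 ∪ ⋯ ∪ B K`,
where `B i ∩ B 0 = {t i}`, `π i : B 0 → B i` is a bijection fixing `t i`,
`e0` maps each `π i b` back to `b`, and `s n` collapses each `B i` with `i ∈ T n`
to its tie-point `t i` and is the identity elsewhere. -/
structure OvI (A : Type*) where
  K : ℕ
  N : ℕ
  B : ℕ → Set A
  F : Set (A → A)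
  t : ℕ → A
  π : ℕ → A → A
  T : ℕ → Set ℕ
  e0 : A → A
  s : ℕ → A → A
  hfin : Finite A
  /-- `A = B 0 ∪ B 1 ∪ ⋯ ∪ B K` -/
  hA : ∀ x : A, ∃ i ≤ K, x ∈ B i
  /-- the base operations map `B 0` into itself -/
  hF : ∀ f ∈ F, Set.MapsTo f (B 0) (B 0)
  /-- each tie-point `t i` lies in `B 0`, and `B i ∩ B 0 = {t i}` -/
  ht : ∀ i, 1 ≤ i → i ≤ K → t i ∈ B 0 ∧ B i ∩ B 0 = {t i}
  /-- for `i ≠ j`: `B i ∩ B j = {t i}` if `t i = t j`, and `B i ∩ B j = ∅` otherwise -/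
  hdisj : ∀ i j, 1 ≤ i → i ≤ K → 1 ≤ j → j ≤ K → i ≠ j →
    (t i = t j → B i ∩ B j = {t i}) ∧ (t i ≠ t j → B i ∩ B j = ∅)
  /-- `π 0` is the identity -/
  hπ0 : ∀ x : A, π 0 x = x
  /-- `π i` is a bijection of `B 0` onto `B i` -/
  hπbij : ∀ i, 1 ≤ i → i ≤ K → Set.BijOn (π i) (B 0) (B i)
  /-- `π i` fixes the tie-point `t i` -/
  hπt : ∀ i, 1 ≤ i → i ≤ K → π i (t i) = t i
  /-- each block `T n` consists of indices in `{1, …, K}` -/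
  hT1 : ∀ n, 1 ≤ n → n ≤ N → T n ⊆ Set.Icc 1 K
  /-- the blocks `T 1, …, T N` partition `{1, …, K}` -/
  hT2 : ∀ i, 1 ≤ i → i ≤ K → ∃! n, 1 ≤ n ∧ n ≤ N ∧ i ∈ T n
  /-- `e0 (π i b) = b` for `b ∈ B 0`; this says `e0 x = π_{ιx}⁻¹ x` -/
  he0 : ∀ i ≤ K, ∀ b ∈ B 0, e0 (π i b) = b
  /-- `s n` collapses `B i` to `t i` for `i ∈ T n` … -/
  hs1 : ∀ n, 1 ≤ n → n ≤ N → ∀ i ∈ T n, ∀ x ∈ B i, s n x = t i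
  /-- … and is the identity elsewhere -/
  hs2 : ∀ n, 1 ≤ n → n ≤ N → ∀ x : A, (∀ i ∈ T n, x ∉ B i) → s n x = x

namespace OvI

variable {A : Type*} (O : OvI A)

/-- `e k = π k ∘ e0`: the idempotent map of `A` onto `B k`. -/
def e (k : ℕ) : A → A := fun x => O.π k (O.e0 x)

/-- The operations of the overalgebra:
`F_A = {f ∘ e0 : f ∈ F} ∪ {e k : 0 ≤ k ≤ K} ∪ {s n : 1 ≤ n ≤ N}`. -/
def FA : Set (A → A) :=
  {g | ∃ f ∈ O.F, g = f ∘ O.e0} ∪ {g | ∃ k ≤ O.K, g = O.e k} ∪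
    {g | ∃ n, 1 ≤ n ∧ n ≤ O.N ∧ g = O.s n}

/-- A congruence of the base algebra `𝐁 = ⟨B 0, F⟩`. -/
def ConB (β : Set (A × A)) : Prop :=
  IsEquivOn (O.B 0) β ∧ ∀ f ∈ O.F, ∀ p ∈ β, (f p.1, f p.2) ∈ β

/-- The `β`-class of `c`. -/
def cls (_O : OvI A) (β : Set (A × A)) (c : A) : Set A := {x | (c, x) ∈ β}

/-- `β^k = {(π k x, π k y) : (x, y) ∈ β}`, the copy of `β` on `B k`. -/
def bk (β : Set (A × A)) (k : ℕ) : Set (A × A) :=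
  {p | ∃ q ∈ β, p = (O.π k q.1, O.π k q.2)}

/-- For `c ∈ B 0` with class `C = c/β`, this is `C ∪ ⋃_{i ∈ ℐ} π i '' C`, where
`ℐ = {i : t i ∈ C}` — a block of `β⋆` meeting `B 0`. -/
def blk (β : Set (A × A)) (c : A) : Set A :=
  O.cls β c ∪ ⋃ i ∈ {i | 1 ≤ i ∧ i ≤ O.K ∧ (c, O.t i) ∈ β}, O.π i '' O.cls β c

/-- `β⋆ = ⋃_{k=0}^{K} β^k ∪ ⋃_{r=1}^{m} (C_r ∪ ⋃_{i∈ℐ_r} C_r^i)²`. -/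
def bstar (β : Set (A × A)) : Set (A × A) :=
  {p | ∃ k ≤ O.K, p ∈ O.bk β k} ∪
    {p | ∃ c ∈ O.B 0, p.1 ∈ O.blk β c ∧ p.2 ∈ O.blk β c}

/-- For `c, d ∈ B 0` in distinct `β`-classes `C_r = c/β`, `C_ℓ = d/β`, this is
`⋃_{i ∈ T n ∩ ℐ_r} C_ℓ^i`. -/
def wing (β : Set (A × A)) (n : ℕ) (c d : A) : Set A :=
  ⋃ i ∈ {i | i ∈ O.T n ∧ (c, O.t i) ∈ β}, O.π i '' O.cls β d

/-- `β̃ = β⋆ ∪ ⋃_{n=1}^{N} ⋃_{r=1}^m ⋃_{ℓ≠r} (⋃_{i ∈ 𝒯_n ∩ ℐ_r} C_ℓ^i)²`. -/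
def btilde (β : Set (A × A)) : Set (A × A) :=
  O.bstar β ∪
    {p | ∃ n, 1 ≤ n ∧ n ≤ O.N ∧ ∃ c ∈ O.B 0, ∃ d ∈ O.B 0, (c, d) ∉ β ∧
      p.1 ∈ O.wing β n c d ∧ p.2 ∈ O.wing β n c d}

end OvI

end Overalg

namespace Overalg.OvI

section Basic

variable {A : Type*} (O : OvI A) {β : Set (A × A)}

lemma tie_mem_B0 {i : ℕ} (h1 : 1 ≤ i) (h2 : i ≤ O.K) : O.t i ∈ O.B 0 := (O.ht i h1 h2).1

lemma tie_mem {i : ℕ} (h1 : 1 ≤ i) (h2 : i ≤ O.K) : O.t i ∈ O.B i := by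
  have h := (O.hπbij i h1 h2).mapsTo (O.tie_mem_B0 h1 h2)
  rwa [O.hπt i h1 h2] at h

lemma eq_tie {i : ℕ} {x : A} (h1 : 1 ≤ i) (h2 : i ≤ O.K) (hxi : x ∈ O.B i)
    (hx0 : x ∈ O.B 0) : x = O.t i := by
  have h : x ∈ O.B i ∩ O.B 0 := ⟨hxi, hx0⟩
  rw [(O.ht i h1 h2).2] at h
  simpa using h

lemma pi_mem {i : ℕ} {b : A} (h2 : i ≤ O.K) (hb : b ∈ O.B 0) : O.π i b ∈ O.B i := by
  rcases Nat.eq_zero_or_pos i with h0 | h1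
  · subst h0; rwa [O.hπ0]
  · exact (O.hπbij i h1 h2).mapsTo hb

lemma pi_inj {i : ℕ} {a b : A} (h2 : i ≤ O.K) (ha : a ∈ O.B 0) (hb : b ∈ O.B 0)
    (h : O.π i a = O.π i b) : a = b := by
  rcases Nat.eq_zero_or_pos i with h0 | h1
  · subst h0; rwa [O.hπ0, O.hπ0] at h
  · exact (O.hπbij i h1 h2).injOn ha hb h

lemma exists_rep (x : A) :
    ∃ i, i ≤ O.K ∧ x ∈ O.B i ∧ O.e0 x ∈ O.B 0 ∧ O.π i (O.e0 x) = x := by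
  obtain ⟨i, hi, hx⟩ := O.hA x
  rcases Nat.eq_zero_or_pos i with h0 | h1
  · subst h0
    have he : O.e0 x = x := by
      have h := O.he0 0 (Nat.zero_le _) x hx
      rwa [O.hπ0] at h
    exact ⟨0, Nat.zero_le _, hx, by rw [he]; exact hx, by rw [he, O.hπ0]⟩
  · obtain ⟨b, hb, hπb⟩ := (O.hπbij i h1 hi).surjOn hx
    have he : O.e0 x = b := by rw [← hπb]; exact O.he0 i hi b hb
    exact ⟨i, hi, hx, by rw [he]; exact hb, by rw [he, hπb]⟩

lemma e0_mem (x : A) : O.e0 x ∈ O.B 0 := by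
  obtain ⟨i, _, _, h, _⟩ := O.exists_rep x
  exact h

lemma e0_fix {x : A} (hx : x ∈ O.B 0) : O.e0 x = x := by
  have h := O.he0 0 (Nat.zero_le _) x hx
  rwa [O.hπ0] at h

lemma pi_e0 {i : ℕ} {x : A} (h2 : i ≤ O.K) (hx : x ∈ O.B i) : O.π i (O.e0 x) = x := by
  rcases Nat.eq_zero_or_pos i with h0 | h1
  · subst h0; rw [O.hπ0, O.e0_fix hx]
  · obtain ⟨b, hb, hπb⟩ := (O.hπbij i h1 h2).surjOn hx
    rw [← hπb, O.he0 i h2 b hb]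

lemma outer_unique {i j : ℕ} {x : A} (hi1 : 1 ≤ i) (hi2 : i ≤ O.K) (hj1 : 1 ≤ j)
    (hj2 : j ≤ O.K) (hxi : x ∈ O.B i) (hxj : x ∈ O.B j) (hx0 : x ∉ O.B 0) : i = j := by
  by_contra hne
  have hmem : x ∈ O.B i ∩ O.B j := ⟨hxi, hxj⟩
  rcases eq_or_ne (O.t i) (O.t j) with ht | ht
  · rw [(O.hdisj i j hi1 hi2 hj1 hj2 hne).1 ht] at hmem
    simp only [Set.mem_singleton_iff] at hmem
    exact hx0 (hmem ▸ O.tie_mem_B0 hi1 hi2)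
  · rw [(O.hdisj i j hi1 hi2 hj1 hj2 hne).2 ht] at hmem
    exact hmem

lemma region (x : A) : x ∈ O.B 0 ∨ ∃ i, 1 ≤ i ∧ i ≤ O.K ∧ x ∈ O.B i ∧ x ∉ O.B 0 := by
  by_cases hx : x ∈ O.B 0
  · exact Or.inl hx
  · obtain ⟨i, hi, hxi, _, _⟩ := O.exists_rep x
    rcases Nat.eq_zero_or_pos i with h0 | h1
    · subst h0; exact absurd hxi hx
    · exact Or.inr ⟨i, h1, hi, hxi, hx⟩

lemma s_fix_B0 {n : ℕ} {x : A} (hn1 : 1 ≤ n) (hn2 : n ≤ O.N) (hx : x ∈ O.B 0) :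
    O.s n x = x := by
  by_cases h : ∀ i ∈ O.T n, x ∉ O.B i
  · exact O.hs2 n hn1 hn2 x h
  · push_neg at h
    obtain ⟨i, hiT, hxi⟩ := h
    have hiK := O.hT1 n hn1 hn2 hiT
    rw [O.hs1 n hn1 hn2 i hiT x hxi, ← O.eq_tie hiK.1 hiK.2 hxi hx]

lemma s_outer_not {n i : ℕ} {x : A} (hn1 : 1 ≤ n) (hn2 : n ≤ O.N) (hi1 : 1 ≤ i)
    (hi2 : i ≤ O.K) (hxi : x ∈ O.B i) (hx0 : x ∉ O.B 0) (hiT : i ∉ O.T n) :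
    O.s n x = x := by
  apply O.hs2 n hn1 hn2
  intro j hjT hxj
  have hjK := O.hT1 n hn1 hn2 hjT
  have hij := O.outer_unique hi1 hi2 hjK.1 hjK.2 hxi hxj hx0
  rw [hij] at hiT
  exact hiT hjT

lemma T_unique {j n m : ℕ} (hj1 : 1 ≤ j) (hj2 : j ≤ O.K) (hn1 : 1 ≤ n) (hn2 : n ≤ O.N)
    (hjn : j ∈ O.T n) (hm1 : 1 ≤ m) (hm2 : m ≤ O.N) (hjm : j ∈ O.T m) : n = m := by
  obtain ⟨p, _, hp⟩ := O.hT2 j hj1 hj2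
  rw [hp n ⟨hn1, hn2, hjn⟩, hp m ⟨hm1, hm2, hjm⟩]

end Basic

namespace ConB

variable {A : Type*} {O : OvI A} {β : Set (A × A)}

theorem refl (hβ : O.ConB β) {a : A} (ha : a ∈ O.B 0) : (a, a) ∈ β := hβ.1.2.1 a ha

theorem symm (hβ : O.ConB β) {a b : A} (h : (a, b) ∈ β) : (b, a) ∈ β := hβ.1.2.2.1 a b h

theorem trans (hβ : O.ConB β) {a b c : A} (h1 : (a, b) ∈ β) (h2 : (b, c) ∈ β) :
    (a, c) ∈ β := hβ.1.2.2.2 a b c h1 h2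

theorem mem1 (hβ : O.ConB β) {a b : A} (h : (a, b) ∈ β) : a ∈ O.B 0 := (hβ.1.1 h).1

theorem mem2 (hβ : O.ConB β) {a b : A} (h : (a, b) ∈ β) : b ∈ O.B 0 := (hβ.1.1 h).2

end ConB

end Overalg.OvI

namespace Overalg.OvI

section Main

variable {A : Type*} (O : OvI A) {β : Set (A × A)}

lemma mem_bk_tilde {k : ℕ} {a b : A} (hk : k ≤ O.K) (hab : (a, b) ∈ β) :
    (O.π k a, O.π k b) ∈ O.btilde β :=
  Or.inl (Or.inl ⟨k, hk, (a, b), hab, rfl⟩)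

lemma mem_beta_tilde {a b : A} (hab : (a, b) ∈ β) : (a, b) ∈ O.btilde β := by
  have h := O.mem_bk_tilde (k := 0) (Nat.zero_le _) hab
  rwa [O.hπ0, O.hπ0] at h

lemma mem_blk_base {c x : A} (h : (c, x) ∈ β) : x ∈ O.blk β c := Or.inl h

lemma mem_blk_pi {c : A} {i : ℕ} {x : A} (h1 : 1 ≤ i) (h2 : i ≤ O.K)
    (hti : (c, O.t i) ∈ β) (hx : (c, x) ∈ β) : O.π i x ∈ O.blk β c :=
  Or.inr (Set.mem_biUnion ⟨h1, h2, hti⟩ ⟨x, hx, rfl⟩)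

lemma mem_blk_of {c : A} {j : ℕ} {y : A} (hj1 : 1 ≤ j) (hj2 : j ≤ O.K) (hy : y ∈ O.B j)
    (htj : (c, O.t j) ∈ β) (hey : (c, O.e0 y) ∈ β) : y ∈ O.blk β c := by
  have h := O.mem_blk_pi hj1 hj2 htj hey
  rwa [O.pi_e0 hj2 hy] at h

lemma mem_blk_sq {c x y : A} (hc : c ∈ O.B 0) (hx : x ∈ O.blk β c) (hy : y ∈ O.blk β c) :
    (x, y) ∈ O.btilde β := Or.inl (Or.inr ⟨c, hc, hx, hy⟩)

lemma mem_wing_pi {n : ℕ} {c d x : A} {i : ℕ} (hiT : i ∈ O.T n) (hcti : (c, O.t i) ∈ β)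
    (hdx : (d, x) ∈ β) : O.π i x ∈ O.wing β n c d :=
  Set.mem_biUnion ⟨hiT, hcti⟩ ⟨x, hdx, rfl⟩

lemma mem_wing_sq {n : ℕ} {c d x y : A} (hn1 : 1 ≤ n) (hn2 : n ≤ O.N) (hc : c ∈ O.B 0)
    (hd : d ∈ O.B 0) (hcd : (c, d) ∉ β) (hx : x ∈ O.wing β n c d)
    (hy : y ∈ O.wing β n c d) : (x, y) ∈ O.btilde β :=
  Or.inr ⟨n, hn1, hn2, c, hc, d, hd, hcd, hx, hy⟩

lemma mk_block (hβ : O.ConB β) {i k : ℕ} {x z : A} (hi1 : 1 ≤ i) (hi2 : i ≤ O.K)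
    (hk1 : 1 ≤ k) (hk2 : k ≤ O.K) (hx : x ∈ O.B i) (hz : z ∈ O.B k)
    (hez : (O.e0 x, O.e0 z) ∈ β) (htk : (O.t i, O.t k) ∈ β) (hte : (O.t i, O.e0 x) ∈ β) :
    (x, z) ∈ O.btilde β := by
  have hti0 : O.t i ∈ O.B 0 := O.tie_mem_B0 hi1 hi2
  exact O.mem_blk_sq hti0
    (O.mem_blk_of hi1 hi2 hx (hβ.refl hti0) hte)
    (O.mem_blk_of hk1 hk2 hz htk (hβ.trans hte hez))

lemma mk_wing (hβ : O.ConB β) {n i k : ℕ} {x z : A} (hn1 : 1 ≤ n) (hn2 : n ≤ O.N)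
    (hiT : i ∈ O.T n) (hkT : k ∈ O.T n) (hi1 : 1 ≤ i) (hi2 : i ≤ O.K)
    (hk2 : k ≤ O.K) (hx : x ∈ O.B i) (hz : z ∈ O.B k)
    (hez : (O.e0 x, O.e0 z) ∈ β) (htk : (O.t i, O.t k) ∈ β) (hte : (O.t i, O.e0 x) ∉ β) :
    (x, z) ∈ O.btilde β := by
  have hti0 : O.t i ∈ O.B 0 := O.tie_mem_B0 hi1 hi2
  have hx0 : O.e0 x ∈ O.B 0 := O.e0_mem x
  apply O.mem_wing_sq hn1 hn2 hti0 hx0 hte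
  · have h := O.mem_wing_pi (i := i) hiT (hβ.refl hti0) (hβ.refl hx0)
    rwa [O.pi_e0 hi2 hx] at h
  · have h := O.mem_wing_pi (i := k) hkT htk hez
    rwa [O.pi_e0 hk2 hz] at h

lemma blk_elim (hβ : O.ConB β) {c x : A} (hx : x ∈ O.blk β c) :
    (c, O.e0 x) ∈ β ∧ (x ∈ O.B 0 → (c, x) ∈ β) ∧
      ∀ i, 1 ≤ i → i ≤ O.K → x ∈ O.B i → x ∉ O.B 0 → (c, O.t i) ∈ β := by
  rcases hx with hx | hx
  · have hx0 : x ∈ O.B 0 := hβ.mem2 hx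
    exact ⟨by rwa [O.e0_fix hx0], fun _ => hx, fun i _ _ _ hxn => absurd hx0 hxn⟩
  · rcases Set.mem_iUnion₂.mp hx with ⟨i, ⟨hi1, hi2, hti⟩, a, ha, rfl⟩
    have ha0 : a ∈ O.B 0 := hβ.mem2 ha
    have he : O.e0 (O.π i a) = a := O.he0 i hi2 a ha0
    have hmem : O.π i a ∈ O.B i := O.pi_mem hi2 ha0
    refine ⟨by rwa [he], ?_, ?_⟩
    · intro h0
      have hteq : O.π i a = O.t i := O.eq_tie hi1 hi2 hmem h0
      have hat : a = O.t i := by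
        apply O.pi_inj hi2 ha0 (O.tie_mem_B0 hi1 hi2)
        rw [hteq, O.hπt i hi1 hi2]
      rw [hteq, ← hat]
      exact ha
    · intro j hj1 hj2 hxj hxn
      have hij := O.outer_unique hi1 hi2 hj1 hj2 hmem hxj hxn
      rwa [← hij]

lemma wing_elim (hβ : O.ConB β) {n : ℕ} {c d x : A} (hn1 : 1 ≤ n) (hn2 : n ≤ O.N)
    (hcd : (c, d) ∉ β) (hx : x ∈ O.wing β n c d) :
    ∃ i, 1 ≤ i ∧ i ≤ O.K ∧ i ∈ O.T n ∧ x ∈ O.B i ∧ x ∉ O.B 0 ∧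
      (c, O.t i) ∈ β ∧ (d, O.e0 x) ∈ β := by
  rcases Set.mem_iUnion₂.mp hx with ⟨i, ⟨hiT, hcti⟩, a, ha, rfl⟩
  have hiK := O.hT1 n hn1 hn2 hiT
  have ha0 : a ∈ O.B 0 := hβ.mem2 ha
  have he : O.e0 (O.π i a) = a := O.he0 i hiK.2 a ha0
  have hmem : O.π i a ∈ O.B i := O.pi_mem hiK.2 ha0
  refine ⟨i, hiK.1, hiK.2, hiT, hmem, ?_, hcti, by rwa [he]⟩
  intro h0
  have hteq : O.π i a = O.t i := O.eq_tie hiK.1 hiK.2 hmem h0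
  have hat : a = O.t i := O.pi_inj hiK.2 ha0 (O.tie_mem_B0 hiK.1 hiK.2)
    (by rw [hteq, O.hπt i hiK.1 hiK.2])
  exact hcd (hβ.trans hcti (hβ.symm (hat ▸ ha)))

lemma bk_elim (hβ : O.ConB β) {k : ℕ} {x y : A} (hk : k ≤ O.K) (h : (x, y) ∈ O.bk β k) :
    (O.e0 x, O.e0 y) ∈ β ∧ x ∈ O.B k ∧ y ∈ O.B k ∧
      (x ∈ O.B 0 → y ∈ O.B 0 → (x, y) ∈ β) := by
  obtain ⟨⟨a, b⟩, hab, heq⟩ := h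
  rw [Prod.ext_iff] at heq
  obtain ⟨hx, hy⟩ := heq
  subst hx; subst hy
  have ha0 : a ∈ O.B 0 := hβ.mem1 hab
  have hb0 : b ∈ O.B 0 := hβ.mem2 hab
  have hea : O.e0 (O.π k a) = a := O.he0 k hk a ha0
  have heb : O.e0 (O.π k b) = b := O.he0 k hk b hb0
  refine ⟨by rw [hea, heb]; exact hab, O.pi_mem hk ha0, O.pi_mem hk hb0, ?_⟩
  intro hx0 hy0
  rcases Nat.eq_zero_or_pos k with h0 | h1
  · subst h0; rwa [O.hπ0, O.hπ0]
  · have hax : O.π k a = O.t k := O.eq_tie h1 hk (O.pi_mem hk ha0) hx0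
    have hby : O.π k b = O.t k := O.eq_tie h1 hk (O.pi_mem hk hb0) hy0
    have ha : a = O.t k := O.pi_inj hk ha0 (O.tie_mem_B0 h1 hk) (by rw [hax, O.hπt k h1 hk])
    have hb : b = O.t k := O.pi_inj hk hb0 (O.tie_mem_B0 h1 hk) (by rw [hby, O.hπt k h1 hk])
    rw [ha, hb] at hab
    rw [hax, hby]; exact hab

lemma btilde_elim (hβ : O.ConB β) {x y : A} (h : (x, y) ∈ O.btilde β) :
    (O.e0 x, O.e0 y) ∈ β ∧
    (x ∈ O.B 0 → y ∈ O.B 0 → (x, y) ∈ β) ∧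
    (x ∈ O.B 0 → ∀ j, 1 ≤ j → j ≤ O.K → y ∈ O.B j → y ∉ O.B 0 →
        (x, O.t j) ∈ β ∧ (x, O.e0 y) ∈ β) ∧
    (∀ i j, 1 ≤ i → i ≤ O.K → 1 ≤ j → j ≤ O.K → x ∈ O.B i → x ∉ O.B 0 →
        y ∈ O.B j → y ∉ O.B 0 → i ≠ j →
        (O.t i, O.t j) ∈ β ∧
          ((O.t i, O.e0 x) ∈ β ∨ ∃ n, 1 ≤ n ∧ n ≤ O.N ∧ i ∈ O.T n ∧ j ∈ O.T n)) := by
  rcases h with (⟨k, hk, hbk⟩ | ⟨c, hc, hxc, hyc⟩) | ⟨n, hn1, hn2, c, hc, d, hd, hcd, hxw, hyw⟩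
  · obtain ⟨hexy, hxk, hyk, hB0⟩ := O.bk_elim hβ hk hbk
    refine ⟨hexy, hB0, ?_, ?_⟩
    · intro hx0 j hj1 hj2 hyj hyn
      have hk1 : 1 ≤ k := by
        rcases Nat.eq_zero_or_pos k with h0 | h1
        · subst h0; exact absurd hyk hyn
        · exact h1
      have hkj : k = j := O.outer_unique hk1 hk hj1 hj2 hyk hyj hyn
      subst hkj
      have hxt : x = O.t k := O.eq_tie hk1 hk hxk hx0
      rw [O.e0_fix hx0] at hexy
      constructor
      · rw [hxt]; exact hβ.refl (O.tie_mem_B0 hk1 hk)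
      · exact hexy
    · intro i j hi1 hi2 hj1 hj2 hxi hxn hyj hyn hij
      have hk1 : 1 ≤ k := by
        rcases Nat.eq_zero_or_pos k with h0 | h1
        · subst h0; exact absurd hxk hxn
        · exact h1
      exact absurd ((O.outer_unique hi1 hi2 hk1 hk hxi hxk hxn).trans
        (O.outer_unique hk1 hk hj1 hj2 hyk hyj hyn)) hij
  · obtain ⟨hcex, hcx0, hcxo⟩ := O.blk_elim hβ hxc
    obtain ⟨hcey, hcy0, hcyo⟩ := O.blk_elim hβ hyc
    refine ⟨hβ.trans (hβ.symm hcex) hcey, ?_, ?_, ?_⟩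
    · intro hx0 hy0; exact hβ.trans (hβ.symm (hcx0 hx0)) (hcy0 hy0)
    · intro hx0 j hj1 hj2 hyj hyn
      have hcx := hcx0 hx0
      exact ⟨hβ.trans (hβ.symm hcx) (hcyo j hj1 hj2 hyj hyn),
        hβ.trans (hβ.symm hcx) hcey⟩
    · intro i j hi1 hi2 hj1 hj2 hxi hxn hyj hyn _
      have h1 := hcxo i hi1 hi2 hxi hxn
      exact ⟨hβ.trans (hβ.symm h1) (hcyo j hj1 hj2 hyj hyn),
        Or.inl (hβ.trans (hβ.symm h1) hcex)⟩
  · obtain ⟨i0, hi01, hi02, hi0T, hxi0, hxn0, hcti0, hdex⟩ := O.wing_elim hβ hn1 hn2 hcd hxw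
    obtain ⟨j0, hj01, hj02, hj0T, hyj0, hyn0, hctj0, hdey⟩ := O.wing_elim hβ hn1 hn2 hcd hyw
    refine ⟨hβ.trans (hβ.symm hdex) hdey, ?_, ?_, ?_⟩
    · intro hx0; exact absurd hx0 hxn0
    · intro hx0; exact absurd hx0 hxn0
    · intro i j hi1 hi2 hj1 hj2 hxi hxn hyj hyn _
      have hii := O.outer_unique hi1 hi2 hi01 hi02 hxi hxi0 hxn
      have hjj := O.outer_unique hj1 hj2 hj01 hj02 hyj hyj0 hyn
      subst hii; subst hjj
      exact ⟨hβ.trans (hβ.symm hcti0) hctj0, Or.inr ⟨n, hn1, hn2, hi0T, hj0T⟩⟩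

lemma btilde_symm (hβ : O.ConB β) {x y : A} (h : (x, y) ∈ O.btilde β) :
    (y, x) ∈ O.btilde β := by
  rcases h with (⟨k, hk, hbk⟩ | ⟨c, hc, hxc, hyc⟩) | ⟨n, hn1, hn2, c, hc, d, hd, hcd, hxw, hyw⟩
  · obtain ⟨⟨a, b⟩, hab, heq⟩ := hbk
    rw [Prod.ext_iff] at heq
    obtain ⟨hx, hy⟩ := heq
    subst hx; subst hy
    exact O.mem_bk_tilde hk (hβ.symm hab)
  · exact Or.inl (Or.inr ⟨c, hc, hyc, hxc⟩)
  · exact Or.inr ⟨n, hn1, hn2, c, hc, d, hd, hcd, hyw, hxw⟩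

lemma btilde_refl (hβ : O.ConB β) (x : A) : (x, x) ∈ O.btilde β := by
  obtain ⟨i, hi, _, he0, hπ⟩ := O.exists_rep x
  have h := O.mem_bk_tilde hi (hβ.refl he0)
  rwa [hπ] at h

end Main

end Overalg.OvI

namespace Overalg.OvI

section Big

variable {A : Type*} (O : OvI A) {β : Set (A × A)}

lemma btilde_trans (hβ : O.ConB β) {x y z : A} (hxy : (x, y) ∈ O.btilde β)
    (hyz : (y, z) ∈ O.btilde β) : (x, z) ∈ O.btilde β := by
  obtain ⟨E1, E2, E3, E4⟩ := O.btilde_elim hβ hxy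
  obtain ⟨F1, F2, F3, F4⟩ := O.btilde_elim hβ hyz
  obtain ⟨G1, G2, G3, G4⟩ := O.btilde_elim hβ (O.btilde_symm hβ hxy)
  obtain ⟨H1, H2, H3, H4⟩ := O.btilde_elim hβ (O.btilde_symm hβ hyz)
  rcases O.region x with hx0 | ⟨i, hi1, hi2, hxi, hxn⟩
  · rcases O.region y with hy0 | ⟨j, hj1, hj2, hyj, hyn⟩
    · rcases O.region z with hz0 | ⟨k, hk1, hk2, hzk, hzn⟩
      · exact O.mem_beta_tilde (hβ.trans (E2 hx0 hy0) (F2 hy0 hz0))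
      · obtain ⟨hytk, hyez⟩ := F3 hy0 k hk1 hk2 hzk hzn
        have hxy' := E2 hx0 hy0
        refine O.mem_blk_sq hx0 (O.mem_blk_base (hβ.refl hx0)) ?_
        exact O.mem_blk_of hk1 hk2 hzk (hβ.trans hxy' hytk) (hβ.trans hxy' hyez)
    · obtain ⟨hxtj, hxey⟩ := E3 hx0 j hj1 hj2 hyj hyn
      rcases O.region z with hz0 | ⟨k, hk1, hk2, hzk, hzn⟩
      · obtain ⟨hztj, hzey⟩ := H3 hz0 j hj1 hj2 hyj hyn
        exact O.mem_beta_tilde (hβ.trans hxey (hβ.symm hzey))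
      · by_cases hjk : j = k
        · subst hjk
          refine O.mem_blk_sq hx0 (O.mem_blk_base (hβ.refl hx0)) ?_
          exact O.mem_blk_of hj1 hj2 hzk hxtj (hβ.trans hxey F1)
        · obtain ⟨htjk, _⟩ := F4 j k hj1 hj2 hk1 hk2 hyj hyn hzk hzn hjk
          refine O.mem_blk_sq hx0 (O.mem_blk_base (hβ.refl hx0)) ?_
          exact O.mem_blk_of hk1 hk2 hzk (hβ.trans hxtj htjk) (hβ.trans hxey F1)
  · rcases O.region y with hy0 | ⟨j, hj1, hj2, hyj, hyn⟩
    · obtain ⟨hyti, hyex⟩ := G3 hy0 i hi1 hi2 hxi hxn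
      rcases O.region z with hz0 | ⟨k, hk1, hk2, hzk, hzn⟩
      · have hzy := H2 hz0 hy0
        refine O.mem_blk_sq hz0 ?_ (O.mem_blk_base (hβ.refl hz0))
        exact O.mem_blk_of hi1 hi2 hxi (hβ.trans hzy hyti) (hβ.trans hzy hyex)
      · obtain ⟨hytk, hyez⟩ := F3 hy0 k hk1 hk2 hzk hzn
        refine O.mem_blk_sq hy0 ?_ ?_
        · exact O.mem_blk_of hi1 hi2 hxi hyti hyex
        · exact O.mem_blk_of hk1 hk2 hzk hytk hyez
    · rcases O.region z with hz0 | ⟨k, hk1, hk2, hzk, hzn⟩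
      · obtain ⟨hztj, hzey⟩ := H3 hz0 j hj1 hj2 hyj hyn
        refine O.mem_blk_sq hz0 ?_ (O.mem_blk_base (hβ.refl hz0))
        by_cases hij : i = j
        · subst hij
          exact O.mem_blk_of hi1 hi2 hxi hztj (hβ.trans hzey (hβ.symm E1))
        · obtain ⟨htij, _⟩ := E4 i j hi1 hi2 hj1 hj2 hxi hxn hyj hyn hij
          exact O.mem_blk_of hi1 hi2 hxi (hβ.trans hztj (hβ.symm htij))
            (hβ.trans hzey (hβ.symm E1))
      · have hexez : (O.e0 x, O.e0 z) ∈ β := hβ.trans E1 F1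
        by_cases hik : i = k
        · subst hik
          have h := O.mem_bk_tilde hi2 hexez
          rwa [O.pi_e0 hi2 hxi, O.pi_e0 hi2 hzk] at h
        · by_cases hij : i = j
          · subst hij
            obtain ⟨htik, D2⟩ := F4 i k hi1 hi2 hk1 hk2 hyj hyn hzk hzn hik
            rcases D2 with hL | ⟨n, hn1, hn2, hiT, hkT⟩
            · exact O.mk_block hβ hi1 hi2 hk1 hk2 hxi hzk hexez htik
                (hβ.trans hL (hβ.symm E1))
            · by_cases hte : (O.t i, O.e0 x) ∈ β
              · exact O.mk_block hβ hi1 hi2 hk1 hk2 hxi hzk hexez htik hte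
              · exact O.mk_wing hβ hn1 hn2 hiT hkT hi1 hi2 hk2 hxi hzk hexez htik hte
          · obtain ⟨htij, D1⟩ := E4 i j hi1 hi2 hj1 hj2 hxi hxn hyj hyn hij
            by_cases hjk : j = k
            · subst hjk
              rcases D1 with hL | ⟨n, hn1, hn2, hiT, hjT⟩
              · exact O.mk_block hβ hi1 hi2 hk1 hk2 hxi hzk hexez htij hL
              · by_cases hte : (O.t i, O.e0 x) ∈ β
                · exact O.mk_block hβ hi1 hi2 hk1 hk2 hxi hzk hexez htij hte
                · exact O.mk_wing hβ hn1 hn2 hiT hjT hi1 hi2 hk2 hxi hzk hexez htij hte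
            · obtain ⟨htjk, D2⟩ := F4 j k hj1 hj2 hk1 hk2 hyj hyn hzk hzn hjk
              have htik := hβ.trans htij htjk
              by_cases hte : (O.t i, O.e0 x) ∈ β
              · exact O.mk_block hβ hi1 hi2 hk1 hk2 hxi hzk hexez htik hte
              · rcases D1 with hL | ⟨n, hn1, hn2, hiT, hjT⟩
                · exact absurd hL hte
                · rcases D2 with hL2 | ⟨m, hm1, hm2, hjT', hkT'⟩
                  · exact absurd (hβ.trans (hβ.trans htij hL2) (hβ.symm E1)) hte
                  · have hnm : n = m := O.T_unique hj1 hj2 hn1 hn2 hjT hm1 hm2 hjT'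
                    subst hnm
                    exact O.mk_wing hβ hn1 hn2 hiT hkT' hi1 hi2 hk2 hxi hzk hexez htik hte

lemma btilde_isCon (hβ : O.ConB β) : IsCon O.FA (O.btilde β) := by
  refine ⟨⟨O.btilde_refl hβ, fun a b => O.btilde_symm hβ, fun a b c => O.btilde_trans hβ⟩, ?_⟩
  rintro g hg ⟨x, y⟩ hxy
  obtain ⟨E1, E2, E3, E4⟩ := O.btilde_elim hβ hxy
  obtain ⟨G1, G2, G3, G4⟩ := O.btilde_elim hβ (O.btilde_symm hβ hxy)
  rcases hg with (⟨f, hf, rfl⟩ | ⟨k, hk, rfl⟩) | ⟨n, hn1, hn2, rfl⟩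
  · exact O.mem_beta_tilde (hβ.2 f hf (O.e0 x, O.e0 y) E1)
  · exact O.mem_bk_tilde hk E1
  · show (O.s n x, O.s n y) ∈ O.btilde β
    rcases O.region x with hx0 | ⟨i, hi1, hi2, hxi, hxn⟩
    · rcases O.region y with hy0 | ⟨j, hj1, hj2, hyj, hyn⟩
      · rw [O.s_fix_B0 hn1 hn2 hx0, O.s_fix_B0 hn1 hn2 hy0]
        exact O.mem_beta_tilde (E2 hx0 hy0)
      · obtain ⟨hxtj, hxey⟩ := E3 hx0 j hj1 hj2 hyj hyn
        rw [O.s_fix_B0 hn1 hn2 hx0]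
        by_cases hjT : j ∈ O.T n
        · rw [O.hs1 n hn1 hn2 j hjT y hyj]
          exact O.mem_beta_tilde hxtj
        · rw [O.s_outer_not hn1 hn2 hj1 hj2 hyj hyn hjT]
          exact hxy
    · rcases O.region y with hy0 | ⟨j, hj1, hj2, hyj, hyn⟩
      · obtain ⟨hyti, hyex⟩ := G3 hy0 i hi1 hi2 hxi hxn
        rw [O.s_fix_B0 hn1 hn2 hy0]
        by_cases hiT : i ∈ O.T n
        · rw [O.hs1 n hn1 hn2 i hiT x hxi]
          exact O.mem_beta_tilde (hβ.symm hyti)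
        · rw [O.s_outer_not hn1 hn2 hi1 hi2 hxi hxn hiT]
          exact hxy
      · by_cases hij : i = j
        · subst hij
          by_cases hiT : i ∈ O.T n
          · rw [O.hs1 n hn1 hn2 i hiT x hxi, O.hs1 n hn1 hn2 i hiT y hyj]
            exact O.mem_beta_tilde (hβ.refl (O.tie_mem_B0 hi1 hi2))
          · rw [O.s_outer_not hn1 hn2 hi1 hi2 hxi hxn hiT,
              O.s_outer_not hn1 hn2 hi1 hi2 hyj hyn hiT]
            exact hxy
        · obtain ⟨htij, D⟩ := E4 i j hi1 hi2 hj1 hj2 hxi hxn hyj hyn hij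
          by_cases hiT : i ∈ O.T n <;> by_cases hjT : j ∈ O.T n
          · rw [O.hs1 n hn1 hn2 i hiT x hxi, O.hs1 n hn1 hn2 j hjT y hyj]
            exact O.mem_beta_tilde htij
          · rw [O.hs1 n hn1 hn2 i hiT x hxi, O.s_outer_not hn1 hn2 hj1 hj2 hyj hyn hjT]
            have hte : (O.t i, O.e0 x) ∈ β := by
              rcases D with hL | ⟨m, hm1, hm2, hiT', hjT'⟩
              · exact hL
              · exact absurd ((O.T_unique hi1 hi2 hm1 hm2 hiT' hn1 hn2 hiT) ▸ hjT') hjT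
            refine O.mem_blk_sq (O.tie_mem_B0 hi1 hi2)
              (O.mem_blk_base (hβ.refl (O.tie_mem_B0 hi1 hi2))) ?_
            exact O.mem_blk_of hj1 hj2 hyj htij (hβ.trans hte E1)
          · rw [O.s_outer_not hn1 hn2 hi1 hi2 hxi hxn hiT, O.hs1 n hn1 hn2 j hjT y hyj]
            have hte : (O.t i, O.e0 x) ∈ β := by
              rcases D with hL | ⟨m, hm1, hm2, hiT', hjT'⟩
              · exact hL
              · exact absurd ((O.T_unique hj1 hj2 hm1 hm2 hjT' hn1 hn2 hjT) ▸ hiT') hiT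
            refine O.mem_blk_sq (O.tie_mem_B0 hi1 hi2) ?_ (O.mem_blk_base htij)
            exact O.mem_blk_of hi1 hi2 hxi (hβ.refl (O.tie_mem_B0 hi1 hi2)) hte
          · rw [O.s_outer_not hn1 hn2 hi1 hi2 hxi hxn hiT,
              O.s_outer_not hn1 hn2 hj1 hj2 hyj hyn hjT]
            exact hxy

lemma btilde_inter (hβ : O.ConB β) : O.btilde β ∩ (O.B 0 ×ˢ O.B 0) = β := by
  ext ⟨x, y⟩
  constructor
  · rintro ⟨h, hB⟩
    exact (O.btilde_elim hβ h).2.1 hB.1 hB.2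
  · intro h
    exact ⟨O.mem_beta_tilde h, hβ.1.1 h⟩

lemma btilde_le (hβ : O.ConB β) {θ : Set (A × A)} (hθ : IsCon O.FA θ)
    (hint : θ ∩ (O.B 0 ×ˢ O.B 0) = β) : θ ⊆ O.btilde β := by
  obtain ⟨⟨hre, hsy, htr⟩, hop⟩ := hθ
  have hsubβ : ∀ a b : A, (a, b) ∈ θ → a ∈ O.B 0 → b ∈ O.B 0 → (a, b) ∈ β := by
    intro a b h ha hb; rw [← hint]; exact ⟨h, ha, hb⟩
  have hek : ∀ k, k ≤ O.K → O.e k ∈ O.FA := fun k hk => Or.inl (Or.inr ⟨k, hk, rfl⟩)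
  have hsn : ∀ n, 1 ≤ n → n ≤ O.N → O.s n ∈ O.FA := fun n h1 h2 => Or.inr ⟨n, h1, h2, rfl⟩
  rintro ⟨x, y⟩ hxy
  have he0θ : (O.π 0 (O.e0 x), O.π 0 (O.e0 y)) ∈ θ := hop (O.e 0) (hek 0 (Nat.zero_le _)) (x, y) hxy
  rw [O.hπ0, O.hπ0] at he0θ
  have hexy : (O.e0 x, O.e0 y) ∈ β := hsubβ _ _ he0θ (O.e0_mem x) (O.e0_mem y)
  rcases O.region x with hx0 | ⟨i, hi1, hi2, hxi, hxn⟩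
  · rcases O.region y with hy0 | ⟨j, hj1, hj2, hyj, hyn⟩
    · rw [O.e0_fix hx0, O.e0_fix hy0] at hexy
      exact O.mem_beta_tilde hexy
    · obtain ⟨n, ⟨hn1, hn2, hjT⟩, -⟩ := O.hT2 j hj1 hj2
      have hs : (O.s n x, O.s n y) ∈ θ := hop (O.s n) (hsn n hn1 hn2) (x, y) hxy
      rw [O.s_fix_B0 hn1 hn2 hx0, O.hs1 n hn1 hn2 j hjT y hyj] at hs
      have hxtj : (x, O.t j) ∈ β := hsubβ _ _ hs hx0 (O.tie_mem_B0 hj1 hj2)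
      rw [O.e0_fix hx0] at hexy
      refine O.mem_blk_sq hx0 (O.mem_blk_base (hβ.refl hx0)) ?_
      exact O.mem_blk_of hj1 hj2 hyj hxtj hexy
  · rcases O.region y with hy0 | ⟨j, hj1, hj2, hyj, hyn⟩
    · obtain ⟨n, ⟨hn1, hn2, hiT⟩, -⟩ := O.hT2 i hi1 hi2
      have hs : (O.s n x, O.s n y) ∈ θ := hop (O.s n) (hsn n hn1 hn2) (x, y) hxy
      rw [O.hs1 n hn1 hn2 i hiT x hxi, O.s_fix_B0 hn1 hn2 hy0] at hs
      have htiy : (O.t i, y) ∈ β := hsubβ _ _ hs (O.tie_mem_B0 hi1 hi2) hy0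
      rw [O.e0_fix hy0] at hexy
      refine O.mem_blk_sq hy0 ?_ (O.mem_blk_base (hβ.refl hy0))
      exact O.mem_blk_of hi1 hi2 hxi (hβ.symm htiy) (hβ.symm hexy)
    · by_cases hij : i = j
      · subst hij
        have h := O.mem_bk_tilde hi2 hexy
        rwa [O.pi_e0 hi2 hxi, O.pi_e0 hi2 hyj] at h
      · obtain ⟨n, ⟨hn1, hn2, hiT⟩, -⟩ := O.hT2 i hi1 hi2
        have hs : (O.s n x, O.s n y) ∈ θ := hop (O.s n) (hsn n hn1 hn2) (x, y) hxy
        rw [O.hs1 n hn1 hn2 i hiT x hxi] at hs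
        have hti0 := O.tie_mem_B0 hi1 hi2
        have htj0 := O.tie_mem_B0 hj1 hj2
        by_cases hjT : j ∈ O.T n
        · rw [O.hs1 n hn1 hn2 j hjT y hyj] at hs
          have htij : (O.t i, O.t j) ∈ β := hsubβ _ _ hs hti0 htj0
          by_cases hte : (O.t i, O.e0 x) ∈ β
          · exact O.mk_block hβ hi1 hi2 hj1 hj2 hxi hyj hexy htij hte
          · exact O.mk_wing hβ hn1 hn2 hiT hjT hi1 hi2 hj2 hxi hyj hexy htij hte
        · rw [O.s_outer_not hn1 hn2 hj1 hj2 hyj hyn hjT] at hs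
          obtain ⟨m, ⟨hm1, hm2, hjm⟩, -⟩ := O.hT2 j hj1 hj2
          have hs2 : (O.s m (O.t i), O.s m y) ∈ θ := hop (O.s m) (hsn m hm1 hm2) (O.t i, y) hs
          rw [O.s_fix_B0 hm1 hm2 hti0, O.hs1 m hm1 hm2 j hjm y hyj] at hs2
          have htij : (O.t i, O.t j) ∈ β := hsubβ _ _ hs2 hti0 htj0
          by_cases hte : (O.t i, O.e0 x) ∈ β
          · exact O.mk_block hβ hi1 hi2 hj1 hj2 hxi hyj hexy htij hte
          · exfalso
            have hxu : (O.π i (O.e0 x), O.π i (O.e0 y)) ∈ θ :=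
              hop (O.e i) (hek i hi2) (x, y) hxy
            rw [O.pi_e0 hi2 hxi] at hxu
            have htiu : (O.π i (O.e0 (O.t i)), O.π i (O.e0 y)) ∈ θ :=
              hop (O.e i) (hek i hi2) (O.t i, y) hs
            rw [O.e0_fix hti0, O.hπt i hi1 hi2] at htiu
            have htix : (O.t i, x) ∈ θ := htr _ _ _ htiu (hsy _ _ hxu)
            have h3 : (O.π 0 (O.e0 (O.t i)), O.π 0 (O.e0 x)) ∈ θ :=
              hop (O.e 0) (hek 0 (Nat.zero_le _)) (O.t i, x) htix
            rw [O.hπ0, O.hπ0, O.e0_fix hti0] at h3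
            exact hte (hsubβ _ _ h3 hti0 (O.e0_mem x))

end Big

end Overalg.OvI

open Overalg OvI in
/-- In an overalgebra `𝐀` of the first type, for every `β ∈ Con 𝐁` the relation `β̃`
is a congruence of `𝐀`, and it is the largest congruence `θ` of `𝐀` with
`θ ∩ (B×B) = β` (that is, `β̃ = β̂`). -/
theorem btilde_isGreatest {A : Type*} (O : OvI A) (β : Set (A × A)) (hβ : O.ConB β) :
    IsCon O.FA (O.btilde β) ∧
    IsGreatest {θ : Set (A × A) | IsCon O.FA θ ∧ θ ∩ (O.B 0 ×ˢ O.B 0) = β}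
      (O.btilde β) := by
  refine ⟨O.btilde_isCon hβ, ⟨O.btilde_isCon hβ, O.btilde_inter hβ⟩, ?_⟩
  intro θ hθ
  exact O.btilde_le hβ hθ.1 hθ.2
end
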